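/- For every integer n ≥ 3, there exists a real number x with 1 < x < 5/4 such that g_n(x) = 0. -/

import Mathlib

noncomputable def g (n x : ℝ) : ℝ :=
  207936*(2*n+1) - 102144*(n+1)*(2*n+5)*x
  + 16*(1568*n^3+64640*n^2-41122*n-16577)*x^2
  - 64*(n+1)*(6206*n^2+3103*n-24590)*x^3
  + 16*(2576*n^4+61176*n^3-136972*n^2+29870*n-29251)*x^4
  - 128*(n-2)*(n+1)*(2528*n^2+1264*n-7475)*x^5
  + 4*(n-2)*(6920*n^4+133792*n^3-248456*n^2+25437*n-155306)*x^6
  - 128*(n-2)^2*(n+1)*(1118*n^2+559*n-2207)*x^7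
  + 8*(n-2)^2*(1216*n^4+21996*n^3-35132*n^2+3055*n-34571)*x^8
  - 16*(n-2)^3*(n+1)*(2318*n^2+1159*n-2324)*x^9
  + 2*(n-2)^3*(944*n^4+17808*n^3-25762*n^2+5873*n-31006)*x^10
  - 32*(n-2)^4*(n+1)*(176*n^2+88*n-5)*x^11
  + (n-2)^4*(192*n^4+4328*n^3-6086*n^2+3419*n-7229)*x^12
  - 8*(n-2)^5*(n+1)*(58*n^2+29*n+56)*x^13
  + 2*(n-2)^5*(4*n^4+144*n^3-215*n^2+229*n-191)*x^14
  - 8*(n-2)^6*(n+1)*(2*n^2+n+4)*x^15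
  + (n-2)^6*(4*n-1)*(2*n^2-3*n+5)*x^16

/-!
Put `m = n - 3`. Then `g (m + 3) 1` and `4 ^ 16 * g (m + 3) (5 / 4)` are polynomials in `m` all of
whose coefficients are negative, respectively positive, so for `m ≥ 0` the polynomial `g n` changes
sign on `[1, 5/4]` and the intermediate value theorem produces the root.
-/

theorem continuous_g (n : ℝ) : Continuous (g n) := by
  unfold g
  fun_prop

theorem g_add_three_one (m : ℝ) :
    g (m + 3) 1 = -(33372 + 191646 * m + 274032 * m ^ 2 + 187011 * m ^ 3 + 72586 * m ^ 4
      + 16968 * m ^ 5 + 2372 * m ^ 6 + 183 * m ^ 7 + 6 * m ^ 8) := by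
  unfold g
  ring

theorem g_add_three_five_quarters (m : ℝ) :
    4 ^ 16 * g (m + 3) (5 / 4) = 11639244382522 + 88791037175767 * m
      + 300442108743490 * m ^ 2 + 460324649901825 * m ^ 3 + 382664148235000 * m ^ 4
      + 189540069140625 * m ^ 5 + 57836288281250 * m ^ 6 + 10701005859375 * m ^ 7
      + 1104003906250 * m ^ 8 + 48828125000 * m ^ 9 := by
  unfold g
  ring

theorem g_one_neg {n : ℝ} (hn : 3 ≤ n) : g n 1 < 0 := by
  obtain ⟨m, hm, rfl⟩ : ∃ m : ℝ, 0 ≤ m ∧ n = m + 3 := ⟨n - 3, by linarith, by ring⟩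
  rw [g_add_three_one, neg_lt_zero]
  positivity

theorem g_five_quarters_pos {n : ℝ} (hn : 3 ≤ n) : 0 < g n (5 / 4) := by
  obtain ⟨m, hm, rfl⟩ : ∃ m : ℝ, 0 ≤ m ∧ n = m + 3 := ⟨n - 3, by linarith, by ring⟩
  have h : 0 < 4 ^ 16 * g (m + 3) (5 / 4) := by
    rw [g_add_three_five_quarters]
    positivity
  exact pos_of_mul_pos_right h (by norm_num)

theorem stmt_6 (n : ℤ) (hn : 3 ≤ n) :
    ∃ x : ℝ, 1 < x ∧ x < 5/4 ∧ g (n : ℝ) x = 0 := by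
  have hn' : (3 : ℝ) ≤ n := by exact_mod_cast hn
  obtain ⟨x, ⟨hx₁, hx₂⟩, hgx⟩ :=
    intermediate_value_Ioo (by norm_num : (1 : ℝ) ≤ 5 / 4) (continuous_g n).continuousOn
      ⟨g_one_neg hn', g_five_quarters_pos hn'⟩
  exact ⟨x, hx₁, hx₂, hgx⟩
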